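/- arXiv:2602.11420 — 4 statements merged into one kernel-verified Lean document; each statement's English description precedes it below -/
import Mathlib

section
/- Let H be a real Hilbert space, ν > 0 and Λ > 0. Let u : [0,∞) → H be twice continuously differentiable and w : [0,∞) → H be continuous, and suppose that u''(t) + ν u'(t) + w(t) = 0 for all t ≥ 0. Assume the function q(t) := ⟨u(t), w(t)⟩ is differentiable with q'(t) = 2⟨u'(t), w(t)⟩ for all t ≥ 0, and that q(t) ≥ Λ‖u(t)‖² for all t ≥ 0. Then there exist constants C > 0 and K ≥ 1, depending only on ν and Λ, such that ‖u'(t)‖² + q(t) ≤ K e^{-Ct} (‖u'(0)‖² + q(0)) for all t ≥ 0. -/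
open MeasureTheory Set
open scoped RealInnerProductSpace

/-!
The energy `‖u'‖² + q` is not strictly decreasing: its derivative `-2ν‖u'‖²` does not see `u`.
Adding the small cross term `ε⟪u, u'⟫` repairs this, since its derivative
`ε(‖u'‖² - ν⟪u, u'⟫ - q)` contributes `-εq ≤ -εΛ‖u‖²`. For `ε` small in terms of `ν` and `Λ`
the perturbed energy is comparable to `‖u'‖² + q` and satisfies `F' ≤ -(ε/3) F`,
so it decays exponentially.
-/

theorem le_mul_exp_neg_of_hasDerivWithinAt_le {f f' : ℝ → ℝ} {C : ℝ}
    (hf : ∀ t ∈ Ici (0 : ℝ), HasDerivWithinAt f (f' t) (Ici 0) t)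
    (hbound : ∀ t ≥ (0 : ℝ), f' t ≤ -C * f t) :
    ∀ t ≥ (0 : ℝ), f t ≤ f 0 * Real.exp (-C * t) := by
  set g : ℝ → ℝ := fun t => Real.exp (C * t) * f t
  have hg : ∀ t ∈ Ici (0 : ℝ),
      HasDerivWithinAt g (Real.exp (C * t) * (f' t + C * f t)) (Ici 0) t := by
    intro t ht
    have hexp :
        HasDerivWithinAt (fun r => Real.exp (C * r)) (Real.exp (C * t) * C) (Ici 0) t := by
      simpa using ((hasDerivAt_id t).const_mul C).exp.hasDerivWithinAt
    exact (hexp.mul (hf t ht)).congr_deriv (by ring)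
  have hg_anti : AntitoneOn g (Ici 0) := by
    refine antitoneOn_of_hasDerivWithinAt_nonpos (convex_Ici 0)
      (f' := fun t => Real.exp (C * t) * (f' t + C * f t))
      (fun t ht => (hg t ht).continuousWithinAt) (fun t ht => ?_) (fun t ht => ?_)
    · rw [interior_Ici] at ht ⊢
      exact (hg t (mem_Ici.mpr ht.le)).mono Ioi_subset_Ici_self
    · rw [interior_Ici] at ht
      have hneg : f' t + C * f t ≤ 0 := by linarith [hbound t (le_of_lt ht)]
      exact mul_nonpos_of_nonneg_of_nonpos (Real.exp_pos _).le hneg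
  intro t ht
  have hgt : Real.exp (C * t) * f t ≤ f 0 := by
    simpa [g] using hg_anti self_mem_Ici ht ht
  rw [neg_mul, Real.exp_neg, ← div_eq_mul_inv, le_div_iff₀ (Real.exp_pos _)]
  linarith

section HypocoerciveEnergy

variable {H : Type*} [NormedAddCommGroup H] [InnerProductSpace ℝ H]

noncomputable def hypocoerciveEnergy (ε : ℝ) (u u' w : ℝ → H) (t : ℝ) : ℝ :=
  ‖u' t‖ ^ 2 + ⟪u t, w t⟫ + ε * ⟪u t, u' t⟫

theorem abs_mul_inner_le_half_energy {ε Λ q : ℝ} {x v : H} (hε : 0 ≤ ε) (hε₁ : ε ≤ 1)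
    (hεΛ : ε ≤ Λ) (hq : Λ * ‖x‖ ^ 2 ≤ q) :
    |ε * ⟪x, v⟫| ≤ (‖v‖ ^ 2 + q) / 2 := by
  have hxv : |⟪x, v⟫| ≤ ‖x‖ * ‖v‖ := abs_real_inner_le_norm x v
  calc |ε * ⟪x, v⟫| = ε * |⟪x, v⟫| := by rw [abs_mul, abs_of_nonneg hε]
    _ ≤ ε * (‖x‖ * ‖v‖) := mul_le_mul_of_nonneg_left hxv hε
    _ ≤ ε * (‖x‖ ^ 2 + ‖v‖ ^ 2) / 2 := by nlinarith [sq_nonneg (‖x‖ - ‖v‖)]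
    _ ≤ (‖v‖ ^ 2 + Λ * ‖x‖ ^ 2) / 2 := by nlinarith [sq_nonneg ‖x‖, sq_nonneg ‖v‖]
    _ ≤ (‖v‖ ^ 2 + q) / 2 := by linarith

theorem dissipation_le {ε ν Λ q : ℝ} {x v : H} (hε : 0 ≤ ε) (hεν : ε ≤ ν)
    (hενΛ : ε * ν ≤ Λ) (hq : Λ * ‖x‖ ^ 2 ≤ q) :
    -(2 * ν) * ‖v‖ ^ 2 + ε * (‖v‖ ^ 2 - ν * ⟪x, v⟫ - q) ≤ -(ε / 2) * (‖v‖ ^ 2 + q) := by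
  have hxv : -(‖x‖ * ‖v‖) ≤ ⟪x, v⟫ := neg_le_of_abs_le (abs_real_inner_le_norm x v)
  -- `εν‖x‖‖v‖ ≤ (ν/2)‖v‖² + (ε/2)(εν)‖x‖²` and `εν‖x‖² ≤ Λ‖x‖² ≤ q`
  have hamgm : ε * ν * (‖x‖ * ‖v‖) ≤ ν / 2 * ‖v‖ ^ 2 + ε / 2 * q := by
    nlinarith [mul_nonneg (hε.trans hεν) (sq_nonneg (‖v‖ - ε * ‖x‖)),
      mul_le_mul_of_nonneg_right hενΛ (mul_nonneg hε (sq_nonneg ‖x‖))]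
  nlinarith [mul_le_mul_of_nonneg_left hxv (mul_nonneg hε (hε.trans hεν)),
    mul_le_mul_of_nonneg_right hεν (sq_nonneg ‖v‖)]

theorem hasDerivWithinAt_hypocoerciveEnergy {u u' u'' w : ℝ → H} {ε ν : ℝ} {s : Set ℝ}
    {t : ℝ} (hu : HasDerivWithinAt u (u' t) s t) (hu' : HasDerivWithinAt u' (u'' t) s t)
    (hq : HasDerivWithinAt (fun r => ⟪u r, w r⟫) (2 * ⟪u' t, w t⟫) s t)
    (heq : u'' t + ν • u' t + w t = 0) :
    HasDerivWithinAt (hypocoerciveEnergy ε u u' w)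
      (-(2 * ν) * ‖u' t‖ ^ 2 + ε * (‖u' t‖ ^ 2 - ν * ⟪u t, u' t⟫ - ⟪u t, w t⟫)) s t := by
  have hu'' : u'' t = -(ν • u' t + w t) :=
    eq_neg_of_add_eq_zero_left (by rwa [← add_assoc])
  refine ((hu'.norm_sq.add hq).add ((hu.inner ℝ hu').const_mul ε)).congr_deriv ?_
  simp only [hu'', inner_neg_right, inner_add_right, inner_smul_right,
    real_inner_self_eq_norm_sq, real_inner_comm (w t) (u' t)]
  ring

end HypocoerciveEnergy

/-- Hypocoercive decay for the damped wave equation.  In a real Hilbert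
space `H`, for `ν > 0`, `Λ > 0`, there are constants `C > 0`, `K ≥ 1` (depending only
on `ν` and `Λ`) such that: for every `u : [0,∞) → H` twice continuously differentiable
(encoded by its derivatives `u'`, `u''` within `[0,∞)`) and continuous `w : [0,∞) → H`
with `u'' + ν u' + w = 0` on `[0,∞)`, if `q t := ⟪u t, w t⟫` is differentiable with
`q' = 2⟪u', w⟫` and `q t ≥ Λ ‖u t‖²` on `[0,∞)`, then
`‖u' t‖² + q t ≤ K e^{-C t} (‖u' 0‖² + q 0)` for all `t ≥ 0`. -/
theorem stmt_4 {H : Type*} [NormedAddCommGroup H] [InnerProductSpace ℝ H]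
    (ν Λ : ℝ) (hν : 0 < ν) (hΛ : 0 < Λ) :
    ∃ C > 0, ∃ K ≥ (1 : ℝ), ∀ u u' u'' w : ℝ → H,
      (∀ t ∈ Ici (0 : ℝ), HasDerivWithinAt u (u' t) (Ici 0) t) →
      (∀ t ∈ Ici (0 : ℝ), HasDerivWithinAt u' (u'' t) (Ici 0) t) →
      ContinuousOn u'' (Ici 0) → ContinuousOn w (Ici 0) →
      (∀ t ≥ (0 : ℝ), u'' t + ν • u' t + w t = 0) →
      (∀ t ∈ Ici (0 : ℝ),
        HasDerivWithinAt (fun r => ⟪u r, w r⟫) (2 * ⟪u' t, w t⟫) (Ici 0) t) →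
      (∀ t ≥ (0 : ℝ), Λ * ‖u t‖ ^ 2 ≤ ⟪u t, w t⟫) →
      ∀ t ≥ (0 : ℝ), ‖u' t‖ ^ 2 + ⟪u t, w t⟫ ≤
        K * Real.exp (-C * t) * (‖u' 0‖ ^ 2 + ⟪u 0, w 0⟫) := by
  set ε := min (min 1 Λ) (min ν (Λ / ν))
  have hε : 0 < ε := by positivity
  have hε₁ : ε ≤ 1 := (min_le_left _ _).trans (min_le_left _ _)
  have hεΛ : ε ≤ Λ := (min_le_left _ _).trans (min_le_right _ _)
  have hεν : ε ≤ ν := (min_le_right _ _).trans (min_le_left _ _)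
  have hενΛ : ε * ν ≤ Λ := (le_div_iff₀ hν).mp ((min_le_right _ _).trans (min_le_right _ _))
  refine ⟨ε / 3, by positivity, 3, by norm_num, ?_⟩
  intro u u' u'' w hu hu' _ _ heq hq hcoer t ht
  set F := hypocoerciveEnergy ε u u' w
  have hcomparable : ∀ s ≥ (0 : ℝ), (‖u' s‖ ^ 2 + ⟪u s, w s⟫) / 2 ≤ F s ∧
      F s ≤ 3 / 2 * (‖u' s‖ ^ 2 + ⟪u s, w s⟫) := fun s hs => by
    have := abs_le.mp (abs_mul_inner_le_half_energy (v := u' s) hε.le hε₁ hεΛ (hcoer s hs))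
    constructor <;> simp only [F, hypocoerciveEnergy] <;> linarith
  have hdecay := le_mul_exp_neg_of_hasDerivWithinAt_le (C := ε / 3)
    (fun s hs => hasDerivWithinAt_hypocoerciveEnergy (hu s hs) (hu' s hs) (hq s hs) (heq s hs))
    (fun s hs => calc
      _ ≤ -(ε / 2) * (‖u' s‖ ^ 2 + ⟪u s, w s⟫) := dissipation_le hε.le hεν hενΛ (hcoer s hs)
      _ ≤ -(ε / 3) * F s := by nlinarith [(hcomparable s hs).2]) t ht
  calc ‖u' t‖ ^ 2 + ⟪u t, w t⟫ ≤ 2 * F t := by linarith [(hcomparable t ht).1]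
    _ ≤ 2 * (F 0 * Real.exp (-(ε / 3) * t)) := by linarith
    _ ≤ 2 * (3 / 2 * (‖u' 0‖ ^ 2 + ⟪u 0, w 0⟫) * Real.exp (-(ε / 3) * t)) := by
      gcongr
      exact (hcomparable 0 le_rfl).2
    _ = 3 * Real.exp (-(ε / 3) * t) * (‖u' 0‖ ^ 2 + ⟪u 0, w 0⟫) := by ring
end

section
/- Let H be a real inner product space and b : H × H → ℝ a symmetric, positive semidefinite bilinear form. Let λ > 0, ν > 0 and let u, v, w, f, g ∈ H satisfy: v = λu - f, (λ + ν)v + w = g, and ⟨x, w⟩ = b(x, u) for all x ∈ H. Then λ² (‖v‖² + b(u, u)) ≤ ‖g‖² + b(f, f). -/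
/-!
Equip `H × H` with the energy form `E((u, v), (f, g)) = b(u, f) + ⟪v, g⟫`. Pairing the resolvent
equations with `(u, v)` gives `E((u, v), (f, g)) = λ E((u, v), (u, v)) + ν ‖v‖²`, so the damping
makes the block operator dissipative, and Cauchy–Schwarz for the positive semidefinite form `E`
turns `λ E(U, U) ≤ E(U, F)` into `λ² E(U, U) ≤ E(F, F)`.
-/

open scoped RealInnerProductSpace

namespace LinearMap.BilinForm

variable {R M : Type*} [CommRing R] [LinearOrder R] [IsStrictOrderedRing R]
  [AddCommGroup M] [Module R M]

theorem sq_mul_apply_self_le_of_mul_apply_self_le_apply {B : LinearMap.BilinForm R M}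
    (hs : ∀ x, 0 ≤ B x x) (hB : LinearMap.IsSymm B) {lam : R} (hlam : 0 ≤ lam) {x y : M}
    (h : lam * B x x ≤ B x y) : lam ^ 2 * B x x ≤ B y y := by
  rcases (hs x).eq_or_lt with hx | hx
  · simpa [← hx] using hs y
  have hsq : (lam * B x x) ^ 2 ≤ B x x * B y y :=
    (pow_le_pow_left₀ (mul_nonneg hlam hx.le) h 2).trans (B.apply_sq_le_of_symm hs hB x y)
  refine le_of_mul_le_mul_left ?_ hx
  calc B x x * (lam ^ 2 * B x x) = (lam * B x x) ^ 2 := by ring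
    _ ≤ B x x * B y y := hsq

end LinearMap.BilinForm

section EnergyForm

variable {H : Type*} [NormedAddCommGroup H] [InnerProductSpace ℝ H]

noncomputable def energyForm (b : LinearMap.BilinForm ℝ H) : LinearMap.BilinForm ℝ (H × H) :=
  b.compl₁₂ (LinearMap.fst ℝ H H) (LinearMap.fst ℝ H H) +
    (innerₗ H).compl₁₂ (LinearMap.snd ℝ H H) (LinearMap.snd ℝ H H)

variable {b : LinearMap.BilinForm ℝ H}

@[simp]
theorem energyForm_apply (x y : H × H) : energyForm b x y = b x.1 y.1 + ⟪x.2, y.2⟫ := rfl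

theorem energyForm_self_nonneg (hpsd : ∀ x, 0 ≤ b x x) (x : H × H) : 0 ≤ energyForm b x x :=
  add_nonneg (hpsd x.1) real_inner_self_nonneg

theorem energyForm_isSymm (hsymm : ∀ x y, b x y = b y x) : LinearMap.IsSymm (energyForm b) :=
  ⟨fun x y => by simp [hsymm x.1, real_inner_comm]⟩

theorem energyForm_resolvent {lam ν : ℝ} {u v w f g : H} (hsymm : ∀ x y, b x y = b y x)
    (hv : v = lam • u - f) (hresolv : (lam + ν) • v + w = g) (hw : ∀ x, ⟪x, w⟫ = b x u) :
    energyForm b (u, v) (f, g) = lam * energyForm b (u, v) (u, v) + ν * ‖v‖ ^ 2 := by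
  have hf : f = lam • u - v := by rw [hv, sub_sub_cancel]
  simp only [energyForm_apply, ← hresolv, hf, map_sub, map_smul, smul_eq_mul, inner_add_right,
    real_inner_smul_right, hw, hsymm u v, real_inner_self_eq_norm_sq]
  ring

end EnergyForm

/-- Resolvent bound for the damped wave block operator.  In a real inner
product space `H`, let `b` be a symmetric positive semidefinite bilinear form, `λ > 0`,
`ν > 0`, and let `u, v, w, f, g ∈ H` satisfy `v = λu - f`, `(λ+ν)v + w = g`, and
`⟪x, w⟫ = b x u` for all `x`.  Then `λ²(‖v‖² + b u u) ≤ ‖g‖² + b f f`. -/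
theorem stmt_5 {H : Type*} [NormedAddCommGroup H] [InnerProductSpace ℝ H]
    (b : H →ₗ[ℝ] H →ₗ[ℝ] ℝ) (hsymm : ∀ x y : H, b x y = b y x)
    (hpsd : ∀ x : H, 0 ≤ b x x)
    (lam ν : ℝ) (hlam : 0 < lam) (hν : 0 < ν)
    (u v w f g : H)
    (hv : v = lam • u - f)
    (hresolv : (lam + ν) • v + w = g)
    (hw : ∀ x : H, ⟪x, w⟫ = b x u) :
    lam ^ 2 * (‖v‖ ^ 2 + b u u) ≤ ‖g‖ ^ 2 + b f f := by
  have hdiss : lam * energyForm b (u, v) (u, v) ≤ energyForm b (u, v) (f, g) := by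
    rw [energyForm_resolvent hsymm hv hresolv hw]
    exact le_add_of_nonneg_right (by positivity)
  have hbound := LinearMap.BilinForm.sq_mul_apply_self_le_of_mul_apply_self_le_apply
    (energyForm_self_nonneg hpsd) (energyForm_isSymm hsymm) hlam.le hdiss
  simpa only [energyForm_apply, real_inner_self_eq_norm_sq, add_comm (b _ _)] using hbound
end

section
/- Let H be a real inner product space, ν > 0, Λ > 0 and T > 0. Let u : ℝ → H be twice continuously differentiable and T-periodic, and let w : ℝ → H be continuous and T-periodic, such that u''(t) + ν u'(t) + w(t) = 0 for all t ∈ ℝ. Assume the function q(t) := ⟨u(t), w(t)⟩ is differentiable with q'(t) = 2⟨u'(t), w(t)⟩ for all t ∈ ℝ, and that q(t) ≥ Λ‖u(t)‖² for all t ∈ ℝ. Then u(t) = 0 for all t ∈ ℝ. -/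
open scoped RealInnerProductSpace

/-!
The energy `E = ‖u'‖² + ⟪u, w⟫` satisfies `E' = -2ν‖u'‖² ≤ 0` along solutions. Being also
`T`-periodic, `E` is constant, so `u' ≡ 0`; then `u'' ≡ 0`, the equation forces `w ≡ 0`,
and coercivity gives `Λ‖u‖² ≤ 0`.
-/

namespace Function.Periodic

variable {α β : Type*}

theorem apply_eq_of_antitone [AddCommGroup α] [LinearOrder α] [IsOrderedAddMonoid α]
    [Archimedean α] [PartialOrder β] {f : α → β} {c : α} (h : Periodic f c) (hc : 0 < c)
    (hf : Antitone f) (x y : α) : f x = f y := by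
  wlog hxy : x ≤ y generalizing x y
  · exact (this y x (le_of_not_ge hxy)).symm
  obtain ⟨n, hn⟩ := Archimedean.arch (y - x) hc
  have hy : y ≤ x + n • c := by simpa [add_comm] using sub_le_iff_le_add.mp hn
  exact le_antisymm (h.nsmul n x ▸ hf hy) (hf hxy)

theorem deriv {F : Type*} [NormedAddCommGroup F] [NormedSpace ℝ F] {f : ℝ → F} {c : ℝ}
    (h : Periodic f c) : Periodic (_root_.deriv f) c := fun x => by
  rw [← deriv_comp_add_const]
  exact congrArg (_root_.deriv · x) (funext h)

theorem hasDerivAt_eq_zero_of_nonpos {f f' : ℝ → ℝ} {c : ℝ} (h : Periodic f c) (hc : 0 < c)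
    (hf : ∀ x, HasDerivAt f (f' x) x) (hf' : f' ≤ 0) (x : ℝ) : f' x = 0 := by
  have hconst : f = fun _ => f x :=
    funext fun y => h.apply_eq_of_antitone hc (antitone_of_hasDerivAt_nonpos hf hf') y x
  exact (hf x).unique (hconst ▸ hasDerivAt_const x (f x))

end Function.Periodic

theorem hasDerivAt_energy_of_damped_eq {H : Type*} [NormedAddCommGroup H] [InnerProductSpace ℝ H]
    {v w : ℝ → H} {q : ℝ → ℝ} {a : H} {ν t : ℝ} (hv : HasDerivAt v a t)
    (heq : a + ν • v t + w t = 0) (hq : HasDerivAt q (2 * ⟪v t, w t⟫) t) :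
    HasDerivAt (fun r => ‖v r‖ ^ 2 + q r) (-(2 * ν) * ‖v t‖ ^ 2) t := by
  refine (hv.norm_sq.add hq).congr_deriv ?_
  have ha : a = -(ν • v t) - w t := by linear_combination (norm := module) heq
  rw [ha]
  simp only [inner_sub_right, inner_neg_right, real_inner_smul_right, real_inner_self_eq_norm_sq]
  ring

theorem stmt_11_general {H : Type*} [NormedAddCommGroup H] [InnerProductSpace ℝ H]
    (ν Λ T : ℝ) (hν : 0 < ν) (hΛ : 0 < Λ) (hT : 0 < T)
    (u w : ℝ → H) (hu : ContDiff ℝ 2 u) (huper : ∀ t, u (t + T) = u t)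
    (hwper : ∀ t, w (t + T) = w t)
    (heq : ∀ t : ℝ, deriv (deriv u) t + ν • deriv u t + w t = 0)
    (hq : ∀ t : ℝ,
      HasDerivAt (fun r => ⟪u r, w r⟫) (2 * ⟪deriv u t, w t⟫) t)
    (hcoer : ∀ t : ℝ, Λ * ‖u t‖ ^ 2 ≤ ⟪u t, w t⟫) :
    ∀ t : ℝ, u t = 0 := by
  have hu'_periodic : Function.Periodic (deriv u) T := Function.Periodic.deriv huper
  have hu'_hasDerivAt (t : ℝ) : HasDerivAt (deriv u) (deriv (deriv u) t) t :=
    ((hu.iterate_deriv' 1 1).differentiable one_ne_zero t).hasDerivAt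
  have henergy (t : ℝ) := hasDerivAt_energy_of_damped_eq (hu'_hasDerivAt t) (heq t) (hq t)
  have henergy_periodic : Function.Periodic (fun r => ‖deriv u r‖ ^ 2 + ⟪u r, w r⟫) T :=
    fun t => by simp only [hu'_periodic t, huper t, hwper t]
  have hu'_zero (t : ℝ) : deriv u t = 0 := by
    have := henergy_periodic.hasDerivAt_eq_zero_of_nonpos hT henergy
      (fun r => mul_nonpos_of_nonpos_of_nonneg (by linarith) (sq_nonneg _)) t
    simpa [hν.ne'] using this
  have hw_zero (t : ℝ) : w t = 0 := by
    simpa [funext hu'_zero] using heq t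
  intro t
  have := hcoer t
  rw [hw_zero t, inner_zero_right] at this
  simpa [hΛ.ne'] using le_antisymm (nonpos_of_mul_nonpos_right this hΛ) (sq_nonneg ‖u t‖)

/-- Uniqueness of periodic solutions of the coercive damped wave
equation.  In a real inner product space `H`, for `ν, Λ, T > 0`, if `u : ℝ → H` is
twice continuously differentiable and `T`-periodic, `w : ℝ → H` is continuous and
`T`-periodic, `u'' + ν u' + w = 0`, the function `q t := ⟪u t, w t⟫` is differentiable
with `q' = 2⟪u', w⟫`, and `q t ≥ Λ‖u t‖²` for all `t`, then `u ≡ 0`. -/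
theorem stmt_11 {H : Type*} [NormedAddCommGroup H] [InnerProductSpace ℝ H]
    (ν Λ T : ℝ) (hν : 0 < ν) (hΛ : 0 < Λ) (hT : 0 < T)
    (u w : ℝ → H) (hu : ContDiff ℝ 2 u) (huper : ∀ t, u (t + T) = u t)
    (hw : Continuous w) (hwper : ∀ t, w (t + T) = w t)
    (heq : ∀ t : ℝ, deriv (deriv u) t + ν • deriv u t + w t = 0)
    (hq : ∀ t : ℝ,
      HasDerivAt (fun r => ⟪u r, w r⟫) (2 * ⟪deriv u t, w t⟫) t)
    (hcoer : ∀ t : ℝ, Λ * ‖u t‖ ^ 2 ≤ ⟪u t, w t⟫) :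
    ∀ t : ℝ, u t = 0 :=
  stmt_11_general ν Λ T hν hΛ hT u w hu huper hwper heq hq hcoer
end

section
/- Let H be a real Banach space, c > 0, M ≥ 1 and T > 0. Let S : [0,∞) → B(H) be a strongly continuous one-parameter semigroup, i.e. S(0) = I, S(t + s) = S(t)S(s) for all t, s ≥ 0, and r ↦ S(r)x is continuous for every x ∈ H, satisfying ‖S(t)‖ ≤ M e^{-ct} for all t ≥ 0. Let f : ℝ → H be continuous and T-periodic. Then U(t) := ∫_{-∞}^t S(t-s)(f(s)) ds is well-defined for all t ∈ ℝ, is continuous and T-periodic, and satisfies the Duhamel identity U(t) = S(t - r)(U(r)) + ∫_r^t S(t-s)(f(s)) ds for all r ≤ t. Moreover, U is the unique bounded continuous function ℝ → H satisfying this Duhamel identity for all r ≤ t. -/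
open MeasureTheory Set Filter Topology

/-!
Substituting `σ = t - s`, the candidate is `U t = ∫_{σ ≥ 0} S σ (f (t - σ))`. A continuous periodic
`f` is bounded by some `C`, so `M C e^{-cσ}` is an integrable majorant independent of `t`: this gives
integrability, continuity (dominated convergence) and `‖U t‖ ≤ M C / c`, and periodicity of `f`
passes to `U` in this form. Splitting `(-∞, t]` at `r` and using `S (t - s) = S (t - r) ∘ S (r - s)`
gives the Duhamel identity. The difference `W` of two bounded solutions satisfies
`W t = S τ (W (t - τ))` for every `τ ≥ 0`, hence `‖W t‖ ≤ M e^{-cτ} sup ‖W‖ → 0`.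
-/

theorem ContinuousOn.clm_apply_of_norm_le {X 𝕜 E F : Type*} [TopologicalSpace X]
    [NontriviallyNormedField 𝕜] [NormedAddCommGroup E] [NormedSpace 𝕜 E]
    [NormedAddCommGroup F] [NormedSpace 𝕜 F] {S : X → E →L[𝕜] F} {g : X → E} {s : Set X}
    {M : ℝ} (hS : ∀ x, ContinuousOn (fun r => S r x) s) (hSM : ∀ r ∈ s, ‖S r‖ ≤ M)
    (hg : ContinuousOn g s) : ContinuousOn (fun r => S r (g r)) s := by
  intro r₀ hr₀
  have hsmall : Tendsto (fun r => S r (g r - g r₀)) (𝓝[s] r₀) (𝓝 0) := by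
    refine squeeze_zero_norm' ?_ (by
      simpa using ((tendsto_iff_norm_sub_tendsto_zero.mp (hg r₀ hr₀)).const_mul M))
    filter_upwards [self_mem_nhdsWithin] with r hr
    exact (S r).le_of_opNorm_le (hSM r hr) _
  simpa [ContinuousWithinAt] using hsmall.add (hS (g r₀) r₀ hr₀)

theorem measurePreserving_sub_left_Ici (t : ℝ) :
    MeasurePreserving (t - ·) (volume.restrict (Ici 0)) (volume.restrict (Iic t)) := by
  have h := (Measure.measurePreserving_sub_left volume t).restrict_image_emb
    (Homeomorph.subLeft t).measurableEmbedding (Ici 0)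
  rwa [image_const_sub_Ici, sub_zero] at h

section HalfLine

variable {E : Type*} [NormedAddCommGroup E]

theorem integrableOn_Iic_comp_sub_left_iff (g : ℝ → E) (t : ℝ) :
    IntegrableOn (fun s => g (t - s)) (Iic t) ↔ IntegrableOn g (Ici 0) := by
  rw [IntegrableOn, ← (measurePreserving_sub_left_Ici t).integrable_comp_emb
    (Homeomorph.subLeft t).measurableEmbedding]
  simp [Function.comp_def, IntegrableOn]

theorem setIntegral_Iic_comp_sub_left [NormedSpace ℝ E] (g : ℝ → E) (t : ℝ) :
    ∫ s in Iic t, g (t - s) = ∫ σ in Ici 0, g σ := by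
  rw [← (measurePreserving_sub_left_Ici t).integral_comp
    (Homeomorph.subLeft t).measurableEmbedding]
  simp

end HalfLine

section MildSolution

variable {H : Type*} [NormedAddCommGroup H] [NormedSpace ℝ H]

noncomputable def mildSolution (S : ℝ → H →L[ℝ] H) (f : ℝ → H) (t : ℝ) : H :=
  ∫ s in Iic t, S (t - s) (f s)

variable {S : ℝ → H →L[ℝ] H} {f : ℝ → H} {c M C : ℝ}

theorem mildSolution_eq_setIntegral_Ici (t : ℝ) :
    mildSolution S f t = ∫ σ in Ici 0, S σ (f (t - σ)) := by
  rw [mildSolution, ← setIntegral_Iic_comp_sub_left _ t]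
  simp_rw [sub_sub_cancel]

theorem Function.Periodic.mildSolution {T : ℝ} (hf : Function.Periodic f T) :
    Function.Periodic (mildSolution S f) T := fun t => by
  simp_rw [mildSolution_eq_setIntegral_Ici, add_sub_right_comm, hf _]

theorem norm_apply_le_of_exp_bound (hSb : ∀ t ≥ 0, ‖S t‖ ≤ M * Real.exp (-c * t))
    {σ : ℝ} (hσ : 0 ≤ σ) {x : H} (hx : ‖x‖ ≤ C) : ‖S σ x‖ ≤ M * C * Real.exp (-c * σ) :=
  calc ‖S σ x‖ ≤ ‖S σ‖ * ‖x‖ := (S σ).le_opNorm x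
    _ ≤ M * Real.exp (-c * σ) * C :=
      mul_le_mul (hSb σ hσ) hx (norm_nonneg _) ((norm_nonneg _).trans (hSb σ hσ))
    _ = M * C * Real.exp (-c * σ) := by ring

theorem norm_le_of_exp_bound (hc : 0 ≤ c) (hSb : ∀ t ≥ 0, ‖S t‖ ≤ M * Real.exp (-c * t))
    {t : ℝ} (ht : 0 ≤ t) : ‖S t‖ ≤ M := by
  have hM : 0 ≤ M := by simpa using (norm_nonneg _).trans (hSb 0 le_rfl)
  calc ‖S t‖ ≤ M * Real.exp (-c * t) := hSb t ht
    _ ≤ M * 1 := by gcongr; exact Real.exp_le_one_iff.mpr (by nlinarith)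
    _ = M := mul_one M

theorem integrableOn_Ici_exp_neg_mul (hc : 0 < c) :
    IntegrableOn (fun σ => Real.exp (-c * σ)) (Ici 0) :=
  Iff.mpr integrableOn_Ici_iff_integrableOn_Ioi (exp_neg_integrableOn_Ioi 0 hc)

theorem integrableOn_Ici_apply_sub (hc : 0 < c)
    (hScont : ∀ x : H, ContinuousOn (fun r => S r x) (Ici 0))
    (hSb : ∀ t ≥ 0, ‖S t‖ ≤ M * Real.exp (-c * t)) (hf : Continuous f) (hC : ∀ s, ‖f s‖ ≤ C)
    (t : ℝ) : IntegrableOn (fun σ => S σ (f (t - σ))) (Ici 0) := by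
  have hcont : ContinuousOn (fun σ => S σ (f (t - σ))) (Ici 0) :=
    ContinuousOn.clm_apply_of_norm_le hScont (fun _ hr => norm_le_of_exp_bound hc.le hSb hr)
      (by fun_prop)
  refine ((integrableOn_Ici_exp_neg_mul hc).const_mul (M * C)).mono' (hcont.aestronglyMeasurable measurableSet_Ici) ?_
  filter_upwards [ae_restrict_mem measurableSet_Ici] with σ hσ
  exact norm_apply_le_of_exp_bound hSb hσ (hC _)

theorem integrableOn_Iic_apply_sub (hc : 0 < c)
    (hScont : ∀ x : H, ContinuousOn (fun r => S r x) (Ici 0))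
    (hSb : ∀ t ≥ 0, ‖S t‖ ≤ M * Real.exp (-c * t)) (hf : Continuous f) (hC : ∀ s, ‖f s‖ ≤ C)
    (t : ℝ) : IntegrableOn (fun s => S (t - s) (f s)) (Iic t) := by
  simpa using (integrableOn_Iic_comp_sub_left_iff (fun σ => S σ (f (t - σ))) t).mpr
    (integrableOn_Ici_apply_sub hc hScont hSb hf hC t)

theorem continuous_mildSolution (hc : 0 < c)
    (hScont : ∀ x : H, ContinuousOn (fun r => S r x) (Ici 0))
    (hSb : ∀ t ≥ 0, ‖S t‖ ≤ M * Real.exp (-c * t)) (hf : Continuous f) (hC : ∀ s, ‖f s‖ ≤ C) :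
    Continuous (mildSolution S f) := by
  simp_rw [funext mildSolution_eq_setIntegral_Ici]
  refine continuous_of_dominated
    (fun t => (integrableOn_Ici_apply_sub hc hScont hSb hf hC t).aestronglyMeasurable)
    (fun t => ?_) ((integrableOn_Ici_exp_neg_mul hc).const_mul (M * C)) (ae_of_all _ fun σ => by fun_prop)
  filter_upwards [ae_restrict_mem measurableSet_Ici] with σ hσ
  exact norm_apply_le_of_exp_bound hSb hσ (hC _)

theorem norm_mildSolution_le (hc : 0 < c) (hSb : ∀ t ≥ 0, ‖S t‖ ≤ M * Real.exp (-c * t))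
    (hC : ∀ s, ‖f s‖ ≤ C) (t : ℝ) : ‖mildSolution S f t‖ ≤ M * C / c := by
  rw [mildSolution_eq_setIntegral_Ici]
  calc _ ≤ ∫ σ in Ici 0, M * C * Real.exp (-c * σ) := by
        refine norm_integral_le_of_norm_le ((integrableOn_Ici_exp_neg_mul hc).const_mul (M * C)) ?_
        filter_upwards [ae_restrict_mem measurableSet_Ici] with σ hσ
        exact norm_apply_le_of_exp_bound hSb hσ (hC _)
    _ = M * C / c := by
        rw [integral_Ici_eq_integral_Ioi, integral_const_mul,
          integral_exp_mul_Ioi (neg_neg_of_pos hc), mul_zero, Real.exp_zero]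
        field_simp

theorem mildSolution_eq_apply_add_intervalIntegral [CompleteSpace H]
    (hSsemi : ∀ t ≥ (0 : ℝ), ∀ s ≥ (0 : ℝ), S (t + s) = (S t).comp (S s)) {r t : ℝ} (hrt : r ≤ t)
    (hr : IntegrableOn (fun s => S (r - s) (f s)) (Iic r))
    (ht : IntegrableOn (fun s => S (t - s) (f s)) (Iic t)) :
    mildSolution S f t = S (t - r) (mildSolution S f r) + ∫ s in r..t, S (t - s) (f s) := by
  have hpast : ∫ s in Iic r, S (t - s) (f s) = S (t - r) (mildSolution S f r) := by
    rw [mildSolution, ← (S (t - r)).integral_comp_comm hr]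
    refine setIntegral_congr_fun measurableSet_Iic fun s hs => ?_
    rw [← ContinuousLinearMap.comp_apply, ← hSsemi _ (sub_nonneg.mpr hrt) _
      (sub_nonneg.mpr hs), sub_add_sub_cancel]
  rw [mildSolution, ← Iic_union_Ioc_eq_Iic hrt, setIntegral_union (Iic_disjoint_Ioc le_rfl)
    measurableSet_Ioc (ht.mono_set (Iic_subset_Iic.mpr hrt))
    (ht.mono_set (Ioc_subset_Icc_self.trans Icc_subset_Iic_self)), hpast,
    intervalIntegral.integral_of_le hrt]

theorem eq_zero_of_bounded_of_eq_apply_sub (hc : 0 < c)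
    (hSb : ∀ t ≥ 0, ‖S t‖ ≤ M * Real.exp (-c * t)) {W : ℝ → H} {B : ℝ} (hB : ∀ t, ‖W t‖ ≤ B)
    (hW : ∀ r t, r ≤ t → W t = S (t - r) (W r)) : W = 0 := by
  funext t
  have hdecay : ∀ τ ≥ 0, ‖W t‖ ≤ M * B * Real.exp (-c * τ) := fun τ hτ => by
    simpa [hW (t - τ) t (by linarith)] using norm_apply_le_of_exp_bound hSb hτ (hB (t - τ))
  have hlim : Tendsto (fun τ => M * B * Real.exp (-c * τ)) atTop (𝓝 0) := by
    simpa using (Real.tendsto_exp_neg_atTop_nhds_zero.comp (tendsto_id.const_mul_atTop hc)).const_mul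
      (M * B)
  exact norm_le_zero_iff.mp (ge_of_tendsto hlim (eventually_ge_atTop 0 |>.mono hdecay))

end MildSolution

theorem stmt_15_general {H : Type*} [NormedAddCommGroup H] [NormedSpace ℝ H] [CompleteSpace H]
    (c M T : ℝ) (hc : 0 < c) (hT : 0 < T)
    (S : ℝ → H →L[ℝ] H)
    (hSsemi : ∀ t ≥ (0 : ℝ), ∀ s ≥ (0 : ℝ), S (t + s) = (S t).comp (S s))
    (hScont : ∀ x : H, ContinuousOn (fun r => S r x) (Ici 0))
    (hSbound : ∀ t ≥ (0 : ℝ), ‖S t‖ ≤ M * Real.exp (-c * t))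
    (f : ℝ → H) (hf : Continuous f) (hfper : ∀ t, f (t + T) = f t) :
    (∀ t : ℝ, IntegrableOn (fun s => S (t - s) (f s)) (Iic t)) ∧
    Continuous (fun t => ∫ s in Iic t, S (t - s) (f s)) ∧
    (∀ t : ℝ, (∫ s in Iic (t + T), S (t + T - s) (f s))
        = ∫ s in Iic t, S (t - s) (f s)) ∧
    (∀ r t : ℝ, r ≤ t →
      (∫ s in Iic t, S (t - s) (f s)) =
        S (t - r) (∫ s in Iic r, S (r - s) (f s)) + ∫ s in r..t, S (t - s) (f s)) ∧
    (∀ V : ℝ → H, Continuous V → (∃ B : ℝ, ∀ t, ‖V t‖ ≤ B) →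
      (∀ r t : ℝ, r ≤ t → V t = S (t - r) (V r) + ∫ s in r..t, S (t - s) (f s)) →
      V = fun t => ∫ s in Iic t, S (t - s) (f s)) := by
  obtain ⟨C, hC⟩ : ∃ C, ∀ s, ‖f s‖ ≤ C :=
    (isBounded_iff_forall_norm_le.mp (Function.Periodic.isBounded_of_continuous hfper hT.ne' hf)).imp
      fun _ hC s => hC _ (mem_range_self s)
  have hint := integrableOn_Iic_apply_sub hc hScont hSbound hf hC
  have hduhamel : ∀ r t, r ≤ t → mildSolution S f t =
      S (t - r) (mildSolution S f r) + ∫ s in r..t, S (t - s) (f s) := fun r t hrt =>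
    mildSolution_eq_apply_add_intervalIntegral hSsemi hrt (hint r) (hint t)
  refine ⟨hint, continuous_mildSolution hc hScont hSbound hf hC,
    Function.Periodic.mildSolution hfper, hduhamel, ?_⟩
  rintro V - ⟨B, hB⟩ hV
  have hdiff : V - mildSolution S f = 0 := by
    refine eq_zero_of_bounded_of_eq_apply_sub hc hSbound (B := B + M * C / c)
      (fun t => (norm_sub_le _ _).trans (add_le_add (hB t) (norm_mildSolution_le hc hSbound hC t)))
      fun r t hrt => ?_
    rw [Pi.sub_apply, Pi.sub_apply, hV r t hrt, hduhamel r t hrt, map_sub]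
    abel
  exact sub_eq_zero.mp hdiff

/-- Existence and uniqueness of the `T`-periodic mild (Duhamel)
solution.  For a real Banach space `H`, an exponentially decaying strongly continuous
semigroup `S` (with `S 0 = I`, `S (t+s) = S t ∘ S s` for `t, s ≥ 0`, strong continuity
on `[0,∞)`, and `‖S t‖ ≤ M e^{-ct}`), and `f : ℝ → H` continuous and `T`-periodic,
the function `U t := ∫_{-∞}^t S(t-s)(f s) ds` is well-defined, continuous,
`T`-periodic, satisfies the Duhamel identity
`U t = S (t-r) (U r) + ∫_r^t S(t-s)(f s) ds` for all `r ≤ t`, and is the unique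
bounded continuous function satisfying this identity. -/
theorem stmt_15 {H : Type*} [NormedAddCommGroup H] [NormedSpace ℝ H] [CompleteSpace H]
    (c M T : ℝ) (hc : 0 < c) (hM : 1 ≤ M) (hT : 0 < T)
    (S : ℝ → H →L[ℝ] H)
    (hS0 : S 0 = ContinuousLinearMap.id ℝ H)
    (hSsemi : ∀ t ≥ (0 : ℝ), ∀ s ≥ (0 : ℝ), S (t + s) = (S t).comp (S s))
    (hScont : ∀ x : H, ContinuousOn (fun r => S r x) (Ici 0))
    (hSbound : ∀ t ≥ (0 : ℝ), ‖S t‖ ≤ M * Real.exp (-c * t))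
    (f : ℝ → H) (hf : Continuous f) (hfper : ∀ t, f (t + T) = f t) :
    (∀ t : ℝ, IntegrableOn (fun s => S (t - s) (f s)) (Iic t)) ∧
    Continuous (fun t => ∫ s in Iic t, S (t - s) (f s)) ∧
    (∀ t : ℝ, (∫ s in Iic (t + T), S (t + T - s) (f s))
        = ∫ s in Iic t, S (t - s) (f s)) ∧
    (∀ r t : ℝ, r ≤ t →
      (∫ s in Iic t, S (t - s) (f s)) =
        S (t - r) (∫ s in Iic r, S (r - s) (f s)) + ∫ s in r..t, S (t - s) (f s)) ∧
    (∀ V : ℝ → H, Continuous V → (∃ B : ℝ, ∀ t, ‖V t‖ ≤ B) →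
      (∀ r t : ℝ, r ≤ t → V t = S (t - r) (V r) + ∫ s in r..t, S (t - s) (f s)) →
      V = fun t => ∫ s in Iic t, S (t - s) (f s)) :=
  stmt_15_general c M T hc hT S hSsemi hScont hSbound f hf hfper
end
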